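/- arXiv:2501.09648 — 3 statements merged into one kernel-verified Lean document; each statement's English description precedes it below -/
import Mathlib

section
/- Let (a_t) be a sequence of nonnegative reals with a_t ≤ 1 for all large t and Σ_t a_t = +∞, let (δ_t) be nonnegative with Σ_t δ_t < +∞, let b > 0, and let (y_t) be nonnegative reals satisfying y_{t+1} ≤ (1 − a_t)^b · y_t + δ_t for all t. Then y_t → 0. -/
open Filter

theorem perturbed_contraction_lemma (a δ y : ℕ → ℝ) (b : ℝ) (hb : 0 < b)
    (ha0 : ∀ t, 0 ≤ a t) (ha1 : ∀ᶠ t in atTop, a t ≤ 1)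
    (hadiv : ¬ Summable a)
    (hδ0 : ∀ t, 0 ≤ δ t) (hδ : Summable δ)
    (hy0 : ∀ t, 0 ≤ y t)
    (hrec : ∀ t, y (t + 1) ≤ (1 - a t) ^ b * y t + δ t) :
    Tendsto y atTop (nhds 0) := by
  rw [Metric.tendsto_atTop]
  intro ε hε
  obtain ⟨N₁, hN₁⟩ := eventually_atTop.mp ha1
  have htail : Tendsto (fun i => ∑' k, δ (k + i)) atTop (nhds 0) :=
    tendsto_sum_nat_add δ
  obtain ⟨N, hle, htailN⟩ := ((eventually_ge_atTop N₁).and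
    (htail.eventually (gt_mem_nhds (by linarith : (0:ℝ) < ε/3)))).exists
  set S : ℕ → ℝ := fun k => ∑ s ∈ Finset.range k, a (s + N) with hSdef
  have key : ∀ k, y (k + N) ≤ Real.exp (-(b * S k)) * y N
      + ∑ s ∈ Finset.range k, δ (s + N) := by
    intro k
    induction k with
    | zero => simp [hSdef]
    | succ k ih =>
      have hk1 : a (k + N) ≤ 1 := hN₁ _ (le_trans hle (Nat.le_add_left N k))
      have h1 : (0:ℝ) ≤ 1 - a (k + N) := by linarith
      have h2 : (1 - a (k + N)) ^ b ≤ Real.exp (-(b * a (k + N))) := by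
        calc (1 - a (k + N)) ^ b ≤ (Real.exp (-(a (k + N)))) ^ b := by
              apply Real.rpow_le_rpow h1 _ hb.le
              have := Real.add_one_le_exp (-(a (k + N)))
              linarith
          _ = Real.exp (-(b * a (k + N))) := by
              rw [← Real.exp_mul]; ring_nf
      have hexp1 : Real.exp (-(b * a (k + N))) ≤ 1 := by
        rw [Real.exp_le_one_iff]
        nlinarith [ha0 (k + N)]
      have hD : (0:ℝ) ≤ ∑ s ∈ Finset.range k, δ (s + N) :=
        Finset.sum_nonneg fun s _ => hδ0 _
      have hstep : y (k + 1 + N) ≤ Real.exp (-(b * a (k + N))) * y (k + N) + δ (k + N) := by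
        have heq : k + 1 + N = k + N + 1 := by ring
        rw [heq]
        calc y (k + N + 1) ≤ (1 - a (k + N)) ^ b * y (k + N) + δ (k + N) := hrec _
          _ ≤ Real.exp (-(b * a (k + N))) * y (k + N) + δ (k + N) := by
              nlinarith [hy0 (k + N)]
      have hmul := mul_le_mul_of_nonneg_left ih (Real.exp_nonneg (-(b * a (k + N))))
      have heq2 : Real.exp (-(b * a (k + N))) * (Real.exp (-(b * S k)) * y N)
          = Real.exp (-(b * S (k + 1))) * y N := by
        rw [← mul_assoc, ← Real.exp_add, hSdef]
        congr 2
        simp [Finset.sum_range_succ]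
        ring
      have hDk : Real.exp (-(b * a (k + N))) * (∑ s ∈ Finset.range k, δ (s + N))
          ≤ ∑ s ∈ Finset.range k, δ (s + N) := by
        nlinarith [Real.exp_nonneg (-(b * a (k + N)))]
      have hsum : (∑ s ∈ Finset.range (k + 1), δ (s + N))
          = (∑ s ∈ Finset.range k, δ (s + N)) + δ (k + N) := by
        simp [Finset.sum_range_succ]
      nlinarith [hy0 (k + N), Real.exp_nonneg (-(b * a (k + N)))]
  have hδ' : Summable (fun s => δ (s + N)) := (summable_nat_add_iff N).mpr hδ
  have hDk : ∀ k, (∑ s ∈ Finset.range k, δ (s + N)) ≤ ε/3 := fun k =>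
    le_trans (Summable.sum_le_tsum _ (fun s _ => hδ0 _) hδ') htailN.le
  have hadiv' : ¬ Summable (fun s => a (s + N)) := fun h =>
    hadiv ((summable_nat_add_iff N).mp h)
  have hStop : Tendsto S atTop atTop :=
    (not_summable_iff_tendsto_nat_atTop_of_nonneg (fun s => ha0 _)).mp hadiv'
  have hbot : Tendsto (fun k => -(b * S k)) atTop atBot := by
    apply Filter.tendsto_neg_atBot_iff.mpr
    exact hStop.const_mul_atTop hb
  have hexp0 : Tendsto (fun k => Real.exp (-(b * S k)) * y N) atTop (nhds 0) := by
    have := (Real.tendsto_exp_atBot.comp hbot).mul_const (y N)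
    simpa using this
  obtain ⟨K, hK⟩ := eventually_atTop.mp
    (hexp0.eventually (gt_mem_nhds (by linarith : (0:ℝ) < ε/3)))
  refine ⟨K + N, fun t ht => ?_⟩
  rw [Real.dist_eq, sub_zero, abs_of_nonneg (hy0 t)]
  obtain ⟨k, rfl⟩ : ∃ k, t = k + N := ⟨t - N, by omega⟩
  have hk : K ≤ k := by omega
  have h1 := key k
  have h2 := hK k hk
  have h3 := hDk k
  linarith
end

section
/- Let φ* ∈ (0,1] and β > φ*/2, and let (B̂_t) be a real sequence satisfying B̂_{t+1} = (1 − φ*/(t+1)) B̂_t + ε_t with |ε_t| ≤ C t^{−(1+β)} for some constant C. Then t^{φ*/2} B̂_t → 0. -/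
open Filter

lemma bern_aux (θ x : ℝ) (hθ0 : 0 ≤ θ) (hθ1 : θ ≤ 1) (hx : 1 ≤ x) :
    1 - θ / x ≤ (1 + 1 / x) ^ (-θ) := by
  have hx0 : 0 < x := lt_of_lt_of_le one_pos hx
  have hb : (0:ℝ) < 1 + 1 / x := by positivity
  have h1 : (1 + 1 / x) ^ θ ≤ 1 + θ / x := by
    have := rpow_one_add_le_one_add_mul_self (s := 1 / x) (by nlinarith) hθ0 hθ1
    calc (1 + 1 / x) ^ θ ≤ 1 + θ * (1 / x) := this
      _ = 1 + θ / x := by ring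
  have hθx : θ / x ≤ 1 := by rw [div_le_one hx0]; exact hθ1.trans hx
  have hnn : (0:ℝ) ≤ 1 - θ / x := by linarith
  have h2 : (1 - θ / x) * (1 + 1 / x) ^ θ ≤ 1 := by
    calc (1 - θ / x) * (1 + 1 / x) ^ θ ≤ (1 - θ / x) * (1 + θ / x) :=
          mul_le_mul_of_nonneg_left h1 hnn
      _ = 1 - (θ / x) ^ 2 := by ring
      _ ≤ 1 := by nlinarith [sq_nonneg (θ / x)]
  have hp : (0:ℝ) < (1 + 1 / x) ^ θ := Real.rpow_pos_of_pos hb θ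
  rw [Real.rpow_neg hb.le, ← one_div, le_div_iff₀ hp]
  exact h2

lemma key_step (φ θ β C M : ℝ) (hφ1 : φ ≤ 1) (hθ0 : 0 < θ) (hθφ : θ < φ)
    (hθβ : θ ≤ β) (hθ1 : θ ≤ 1) (hC : 0 ≤ C) (hM : 4 * C / (φ - θ) ≤ M)
    (x : ℝ) (hx : 1 ≤ x) (hx2 : 2 * θ / (φ - θ) ≤ x) :
    (1 - φ / (x + 1)) * (M * x ^ (-θ)) + C * x ^ (-(1 + β)) ≤ M * (x + 1) ^ (-θ) := by
  have hx0 : 0 < x := lt_of_lt_of_le one_pos hx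
  have hx1 : (0:ℝ) < x + 1 := by linarith
  have hδ : 0 < φ - θ := by linarith
  have hM0 : 0 ≤ M := le_trans (by positivity) hM
  have hA : (0:ℝ) < x ^ (-θ) := Real.rpow_pos_of_pos hx0 _
  -- (x+1)^(-θ) = x^(-θ) * (1+1/x)^(-θ)
  have hsplit : (x + 1) ^ (-θ) = x ^ (-θ) * (1 + 1 / x) ^ (-θ) := by
    rw [← Real.mul_rpow hx0.le (by positivity)]
    congr 1
    field_simp
  -- Bernoulli bound
  have hb := bern_aux θ x hθ0.le hθ1 hx
  -- gap bound: φ/(x+1) - θ/x ≥ (φ-θ)/2/(x+1)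
  have hgap : (φ - θ) / 2 / (x + 1) ≤ φ / (x + 1) - θ / x := by
    rw [div_sub_div _ _ (ne_of_gt hx1) (ne_of_gt hx0), div_div, div_le_div_iff₀ (by positivity) (by positivity)]
    have : 2 * θ ≤ (φ - θ) * x := by
      rw [div_le_iff₀ hδ] at hx2; linarith
    nlinarith
  -- core: M * x^(-θ) * ((φ-θ)/2/(x+1)) ≥ C * x^(-(1+β))
  have hrpow : x ^ (-(1 + β)) ≤ x ^ (-θ) / x := by
    have : x ^ (-θ) / x = x ^ (-(θ + 1)) := by
      rw [Real.rpow_neg hx0.le, Real.rpow_neg hx0.le, Real.rpow_add hx0, Real.rpow_one]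
      field_simp
    rw [this]
    exact Real.rpow_le_rpow_of_exponent_le hx (by linarith)
  have hcore : C * x ^ (-(1 + β)) ≤ M * x ^ (-θ) * ((φ - θ) / 2 / (x + 1)) := by
    have h1 : C * x ^ (-(1 + β)) ≤ C * (x ^ (-θ) / x) :=
      mul_le_mul_of_nonneg_left hrpow hC
    have h2 : C * (x ^ (-θ) / x) ≤ M * x ^ (-θ) * ((φ - θ) / 2 / (x + 1)) := by
      have hxx : x + 1 ≤ 2 * x := by linarith
      have hMC : 4 * C ≤ M * (φ - θ) := by
        rw [div_le_iff₀ hδ] at hM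
        linarith
      rw [show C * (x ^ (-θ) / x) = C * x ^ (-θ) / x from by ring,
        show M * x ^ (-θ) * ((φ - θ) / 2 / (x + 1)) = M * x ^ (-θ) * (φ - θ) / (2 * (x + 1)) from by
          rw [div_div, ← mul_div_assoc],
        div_le_div_iff₀ hx0 (by positivity)]
      nlinarith [mul_le_mul_of_nonneg_right hMC (mul_nonneg hA.le hx0.le),
        mul_le_mul_of_nonneg_left hxx (mul_nonneg hC hA.le)]
    exact h1.trans h2
  -- combine
  have hmain : M * x ^ (-θ) * ((1 - θ / x)) ≤ M * (x + 1) ^ (-θ) := by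
    rw [hsplit, ← mul_assoc]
    exact mul_le_mul_of_nonneg_left hb (by positivity)
  nlinarith [mul_le_mul_of_nonneg_left hgap (mul_nonneg hM0 hA.le)]

theorem rescaled_contraction (φ β C : ℝ) (hφ0 : 0 < φ) (hφ1 : φ ≤ 1) (hβ : φ / 2 < β)
    (B ε : ℕ → ℝ) (t₀ : ℕ)
    (hrec : ∀ t ≥ t₀, B (t + 1) = (1 - φ / (t + 1)) * B t + ε t)
    (hε : ∀ t ≥ 1, |ε t| ≤ C * (t : ℝ) ^ (-(1 + β))) :
    Tendsto (fun t : ℕ => (t : ℝ) ^ (φ / 2) * B t) atTop (nhds 0) := by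
  have hC0 : 0 ≤ C := by
    have h := hε 1 le_rfl
    have h1 : ((1:ℕ) : ℝ) ^ (-(1 + β)) = 1 := by
      norm_num
    rw [h1, mul_one] at h
    exact (abs_nonneg _).trans h
  set θ : ℝ := (φ / 2 + min φ β) / 2 with hθdef
  have hmin : φ / 2 < min φ β := lt_min (by linarith) hβ
  have hminφ : min φ β ≤ φ := min_le_left _ _
  have hminβ : min φ β ≤ β := min_le_right _ _
  have hθlo : φ / 2 < θ := by rw [hθdef]; linarith
  have hθφ : θ < φ := by rw [hθdef]; linarith
  have hθβ : θ ≤ β := by rw [hθdef]; linarith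
  have hθ0 : 0 < θ := by linarith
  have hθ1 : θ ≤ 1 := by linarith
  have hδ : 0 < φ - θ := by linarith
  set T₁ : ℕ := max 1 ⌈2 * θ / (φ - θ)⌉₊ with hT₁def
  set T : ℕ := max t₀ T₁ with hTdef
  have hT1 : 1 ≤ T := le_trans (le_max_left 1 _) (le_max_right t₀ T₁)
  have hTpos : (0:ℝ) < (T:ℝ) := by exact_mod_cast hT1
  set M : ℝ := max (4 * C / (φ - θ)) (|B T| * (T:ℝ) ^ θ) with hMdef
  have hM1 : 4 * C / (φ - θ) ≤ M := le_max_left _ _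
  have hbound : ∀ n : ℕ, |B (T + n)| ≤ M * ((T + n : ℕ) : ℝ) ^ (-θ) := by
    intro n
    induction n with
    | zero =>
      have hTpow : (0:ℝ) < (T:ℝ) ^ (-θ) := Real.rpow_pos_of_pos hTpos _
      have h2 : |B T| * (T:ℝ) ^ θ ≤ M := le_max_right _ _
      have h3 : |B T| * (T:ℝ) ^ θ * (T:ℝ) ^ (-θ) ≤ M * (T:ℝ) ^ (-θ) :=
        mul_le_mul_of_nonneg_right h2 hTpow.le
      have h4 : (T:ℝ) ^ θ * (T:ℝ) ^ (-θ) = 1 := by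
        rw [← Real.rpow_add hTpos]; norm_num
      simpa [mul_assoc, h4] using h3
    | succ n ih =>
      set t := T + n with htdef
      have ht0 : t₀ ≤ t := le_trans (le_max_left _ _) (Nat.le_add_right T n)
      have ht1 : 1 ≤ t := le_trans hT1 (Nat.le_add_right T n)
      have htR : (1:ℝ) ≤ (t:ℝ) := by exact_mod_cast ht1
      have htRpos : (0:ℝ) < (t:ℝ) := by linarith
      have htx2 : 2 * θ / (φ - θ) ≤ (t:ℝ) := by
        have h1 : (⌈2 * θ / (φ - θ)⌉₊ : ℕ) ≤ t :=
          le_trans (le_trans (le_max_right 1 _) (le_max_right t₀ T₁)) (Nat.le_add_right T n)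
        calc 2 * θ / (φ - θ) ≤ (⌈2 * θ / (φ - θ)⌉₊ : ℝ) := Nat.le_ceil _
          _ ≤ (t:ℝ) := by exact_mod_cast h1
      have hfac : 0 ≤ 1 - φ / ((t:ℝ) + 1) := by
        have h1 : φ / ((t:ℝ) + 1) ≤ 1 := by
          rw [div_le_one (by linarith)]; linarith
        linarith
      have hrec' := hrec t ht0
      have hεt := hε t ht1
      have hstep : |B (t + 1)| ≤ (1 - φ / ((t:ℝ) + 1)) * (M * (t:ℝ) ^ (-θ)) +
          C * (t:ℝ) ^ (-(1 + β)) := by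
        rw [hrec']
        calc |(1 - φ / ((t:ℝ) + 1)) * B t + ε t|
            ≤ |(1 - φ / ((t:ℝ) + 1)) * B t| + |ε t| := abs_add_le _ _
          _ = (1 - φ / ((t:ℝ) + 1)) * |B t| + |ε t| := by
              rw [abs_mul, abs_of_nonneg hfac]
          _ ≤ (1 - φ / ((t:ℝ) + 1)) * (M * (t:ℝ) ^ (-θ)) + C * (t:ℝ) ^ (-(1 + β)) := by gcongr
      have hkey := key_step φ θ β C M hφ1 hθ0 hθφ hθβ hθ1 hC0 hM1 (t:ℝ) htR htx2
      have hcast : ((T + (n + 1) : ℕ) : ℝ) = (t:ℝ) + 1 := by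
        rw [htdef]; push_cast; ring
      show |B (t + 1)| ≤ M * ((T + (n + 1) : ℕ) : ℝ) ^ (-θ)
      rw [hcast]
      exact hstep.trans hkey
  -- squeeze
  have hev : ∀ᶠ t : ℕ in atTop, ‖(t : ℝ) ^ (φ / 2) * B t‖ ≤ M * (t:ℝ) ^ (φ / 2 - θ) := by
    filter_upwards [eventually_ge_atTop T] with t ht
    obtain ⟨n, rfl⟩ := Nat.exists_eq_add_of_le ht
    have h1 := hbound n
    have ht1 : 1 ≤ T + n := le_trans hT1 (Nat.le_add_right T n)
    have htRpos : (0:ℝ) < ((T + n : ℕ):ℝ) := by exact_mod_cast ht1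
    rw [Real.norm_eq_abs, abs_mul, abs_of_nonneg (Real.rpow_nonneg htRpos.le _)]
    calc ((T + n : ℕ):ℝ) ^ (φ / 2) * |B (T + n)|
        ≤ ((T + n : ℕ):ℝ) ^ (φ / 2) * (M * ((T + n : ℕ):ℝ) ^ (-θ)) := by gcongr
      _ = M * (((T + n : ℕ):ℝ) ^ (φ / 2) * ((T + n : ℕ):ℝ) ^ (-θ)) := by ring
      _ = M * ((T + n : ℕ):ℝ) ^ (φ / 2 - θ) := by
          rw [← Real.rpow_add htRpos]; ring_nf
  have hg : Tendsto (fun t : ℕ => M * (t:ℝ) ^ (φ / 2 - θ)) atTop (nhds 0) := by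
    have h1 : Tendsto (fun x : ℝ => x ^ (-(θ - φ / 2))) atTop (nhds 0) :=
      tendsto_rpow_neg_atTop (by linarith)
    have h2 : Tendsto (fun t : ℕ => ((t:ℝ)) ^ (-(θ - φ / 2))) atTop (nhds 0) :=
      h1.comp tendsto_natCast_atTop_atTop
    have h3 := h2.const_mul M
    rw [mul_zero] at h3
    convert h3 using 2 with t
    ring_nf
  exact squeeze_zero_norm' hev hg
end

section
/- Consider the scalar recursions A_{t+1} = A_t + (1/(t+1)) φ* ΔM_{t+1} + R_{A,t+1} and B_{t+1} = B_t − (1/(t+1))(φ* B_t − A_t) + (1/(t+1)) ΔM_{t+1} + R_{B,t+1}, where φ* ∈ (0,1], R_{A,t+1}, R_{B,t+1} = O(t^{−(1+β)}) with β > φ*/2, (ΔM_t) is a martingale difference sequence with ΔM_{t+1} = O(t^{1−φ*}), and A_t converges a.s. to a finite limit A_∞. Then B_t − A_t/φ* → 0 a.s., and moreover B_t − A_t/φ* = o(t^{−φ*/2}) a.s. -/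
open Filter MeasureTheory

/-- Bernoulli-based bound: `(x+1)^(-γ) ≥ x^(-γ) * (x/(x+γ))` for `x ≥ 1`, `0 < γ ≤ 1`. -/
lemma aux_bern (γ x : ℝ) (hγ0 : 0 < γ) (hγ1 : γ ≤ 1) (hx1 : 1 ≤ x) :
    x ^ (-γ) * (x / (x + γ)) ≤ (x + 1) ^ (-γ) := by
  have hx0 : (0:ℝ) < x := lt_of_lt_of_le one_pos hx1
  have hxγ : (0:ℝ) < x + γ := by linarith
  have hBern : (x + 1) ^ γ ≤ x ^ γ * ((x + γ) / x) := by
    have h1 : x + 1 = x * (1 + 1/x) := by field_simp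
    rw [h1, Real.mul_rpow hx0.le (by positivity)]
    have h2 : (1 + 1/x) ^ γ ≤ 1 + γ * (1/x) :=
      rpow_one_add_le_one_add_mul_self
        (le_trans (by norm_num : (-1:ℝ) ≤ 0) (by positivity)) hγ0.le hγ1
    have h3 : (1:ℝ) + γ * (1/x) = (x + γ)/x := by field_simp
    rw [← h3]
    exact mul_le_mul_of_nonneg_left h2 (Real.rpow_nonneg hx0.le γ)
  have hp1 : (0:ℝ) < (x + 1) ^ γ := Real.rpow_pos_of_pos (by linarith) γ
  have hp2 : (0:ℝ) < x ^ γ := Real.rpow_pos_of_pos hx0 γ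
  rw [Real.rpow_neg hx0.le, Real.rpow_neg (by linarith : (0:ℝ) ≤ x + 1)]
  have heq : (x ^ γ)⁻¹ * (x / (x + γ)) = (x ^ γ * ((x + γ) / x))⁻¹ := by
    field_simp
  rw [heq]
  exact inv_anti₀ hp1 hBern

/-- Key one-step inequality for the contraction argument. -/
lemma aux_step (φ γ β C K x : ℝ) (hγ0 : 0 < γ) (hγ1 : γ ≤ 1) (hγφ : γ < φ)
    (hφ1 : φ ≤ 1) (hγβ : γ ≤ β) (hx1 : 1 ≤ x) (hxT : 2 * γ ≤ (φ - γ) * x)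
    (hC : 0 ≤ C) (hK : 8 * C / (φ - γ) ≤ K) :
    (1 - φ / (x + 1)) * (K * x ^ (-γ)) + C * x ^ (-(1 + β)) ≤ K * (x + 1) ^ (-γ) := by
  have hφγ : (0:ℝ) < φ - γ := sub_pos.2 hγφ
  have hK0 : (0:ℝ) ≤ K := le_trans (by positivity) hK
  have hx0 : (0:ℝ) < x := lt_of_lt_of_le one_pos hx1
  have hxγ : (0:ℝ) < x + γ := by linarith
  have hy : (0:ℝ) < x ^ (-γ) := Real.rpow_pos_of_pos hx0 _
  -- bound the perturbation term
  have hz1 : x ^ (-(1 + β)) ≤ x ^ (-γ) * x⁻¹ := by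
    have h1 : x ^ (-(1 + β)) ≤ x ^ (-(γ + 1)) :=
      Real.rpow_le_rpow_of_exponent_le hx1 (by linarith)
    have h2 : x ^ (-(γ + 1)) = x ^ (-γ) * x⁻¹ := by
      rw [show -(γ + 1) = -γ + (-1) by ring, Real.rpow_add hx0, Real.rpow_neg_one]
    linarith [h1, h2.le, h2.ge]
  have hz : C * x ^ (-(1 + β)) ≤ C * (x ^ (-γ) * x⁻¹) :=
    mul_le_mul_of_nonneg_left hz1 hC
  -- the drift gap
  have hD : (φ - γ) / (8 * x) ≤ x / (x + γ) - (1 - φ / (x + 1)) := by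
    have heq : x / (x + γ) - (1 - φ / (x + 1))
        = (φ * (x + γ) - γ * (x + 1)) / ((x + 1) * (x + γ)) := by
      field_simp; ring
    rw [heq, div_le_div_iff₀ (by positivity) (by positivity)]
    nlinarith [mul_le_mul_of_nonneg_right hxT hx0.le,
      mul_nonneg (mul_nonneg hφγ.le (by linarith : (0:ℝ) ≤ 3*x+1)) (by linarith : (0:ℝ) ≤ x-1),
      mul_nonneg (mul_nonneg hφγ.le (by linarith : (0:ℝ) ≤ 1-γ)) (by linarith : (0:ℝ) ≤ x+1),
      mul_nonneg (mul_nonneg hγ0.le hx0.le) (by linarith : (0:ℝ) ≤ φ)]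
  -- combine
  have hmain : (1 - φ / (x + 1)) * (K * x ^ (-γ)) + C * (x ^ (-γ) * x⁻¹)
      ≤ K * (x ^ (-γ) * (x / (x + γ))) := by
    have h1 : K * x ^ (-γ) * ((φ - γ) / (8 * x)) ≤ K * x ^ (-γ) * (x / (x + γ) - (1 - φ / (x + 1))) :=
      mul_le_mul_of_nonneg_left hD (by positivity)
    have h2 : C * (x ^ (-γ) * x⁻¹) ≤ K * x ^ (-γ) * ((φ - γ) / (8 * x)) := by
      have h3 : (8 * C / (φ - γ)) * (x ^ (-γ) * ((φ - γ) / (8 * x))) = C * (x ^ (-γ) * x⁻¹) := by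
        field_simp
      calc C * (x ^ (-γ) * x⁻¹) = (8 * C / (φ - γ)) * (x ^ (-γ) * ((φ - γ) / (8 * x))) := h3.symm
        _ ≤ K * (x ^ (-γ) * ((φ - γ) / (8 * x))) :=
          mul_le_mul_of_nonneg_right hK (by positivity)
        _ = K * x ^ (-γ) * ((φ - γ) / (8 * x)) := by ring
    nlinarith [h1, h2]
  calc (1 - φ / (x + 1)) * (K * x ^ (-γ)) + C * x ^ (-(1 + β))
      ≤ (1 - φ / (x + 1)) * (K * x ^ (-γ)) + C * (x ^ (-γ) * x⁻¹) := by linarith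
    _ ≤ K * (x ^ (-γ) * (x / (x + γ))) := hmain
    _ ≤ K * (x + 1) ^ (-γ) :=
        mul_le_mul_of_nonneg_left (aux_bern γ x hγ0 hγ1 hx1) hK0

/-- Deterministic perturbed-contraction lemma. -/
lemma aux_contract (b e : ℕ → ℝ) (φ β C : ℝ) (hφ0 : 0 < φ) (hφ1 : φ ≤ 1)
    (hβ : φ / 2 < β) (hC : 0 ≤ C)
    (hrec : ∀ t : ℕ, 1 ≤ t → b (t + 1) = (1 - φ / (t + 1)) * b t + e (t + 1))
    (he : ∀ t : ℕ, 1 ≤ t → |e (t + 1)| ≤ C * (t : ℝ) ^ (-(1 + β))) :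
    Tendsto b atTop (nhds 0) ∧
    Tendsto (fun t : ℕ => (t : ℝ) ^ (φ / 2) * b t) atTop (nhds 0) := by
  set γ : ℝ := (φ / 2 + min φ β) / 2 with hγdef
  have hmin : φ / 2 < min φ β := lt_min (by linarith) hβ
  have hγφ : γ < φ := by
    have : min φ β ≤ φ := min_le_left _ _
    rw [hγdef]; nlinarith
  have hγβ : γ < β := by
    have : min φ β ≤ β := min_le_right _ _
    rw [hγdef]; nlinarith
  have hγhalf : φ / 2 < γ := by rw [hγdef]; nlinarith
  have hγ0 : 0 < γ := by linarith
  have hγ1 : γ ≤ 1 := by linarith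
  have hφγ : (0:ℝ) < φ - γ := by linarith
  obtain ⟨T₀, hT₀⟩ := exists_nat_ge (2 * γ / (φ - γ))
  set T : ℕ := T₀ + 1 with hTdef
  have hT1 : 1 ≤ T := Nat.le_add_left 1 T₀
  have hTx : 2 * γ ≤ (φ - γ) * T := by
    have h1 : (T₀ : ℝ) ≤ T := by exact_mod_cast Nat.le_succ T₀
    have h2 : 2 * γ / (φ - γ) ≤ (T : ℝ) := le_trans hT₀ h1
    calc 2 * γ = (2 * γ / (φ - γ)) * (φ - γ) := by field_simp
      _ ≤ (T : ℝ) * (φ - γ) := mul_le_mul_of_nonneg_right h2 hφγ.le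
      _ = (φ - γ) * T := by ring
  set K : ℝ := max (|b T| * (T : ℝ) ^ γ) (8 * C / (φ - γ)) with hKdef
  have hK0 : (0:ℝ) ≤ K := le_trans (by positivity) (le_max_right _ _)
  have hbound : ∀ t : ℕ, T ≤ t → |b t| ≤ K * (t : ℝ) ^ (-γ) := by
    intro t ht
    induction t, ht using Nat.le_induction with
    | base =>
      have hT0 : (0:ℝ) < (T : ℝ) := by exact_mod_cast Nat.lt_of_lt_of_le Nat.zero_lt_one hT1
      have h1 : |b T| * (T : ℝ) ^ γ ≤ K := le_max_left _ _
      have h2 : |b T| = |b T| * (T : ℝ) ^ γ * (T : ℝ) ^ (-γ) := by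
        rw [mul_assoc, ← Real.rpow_add hT0]
        simp
      rw [h2]
      exact mul_le_mul_of_nonneg_right h1 (Real.rpow_pos_of_pos hT0 _).le
    | succ t ht ih =>
      have ht1 : 1 ≤ t := le_trans hT1 ht
      have hx1 : (1:ℝ) ≤ (t : ℝ) := by exact_mod_cast ht1
      have hx0 : (0:ℝ) < (t : ℝ) := by linarith
      have hpos : (0:ℝ) ≤ 1 - φ / ((t : ℝ) + 1) := by
        have : φ / ((t : ℝ) + 1) ≤ 1 := by
          rw [div_le_one (by linarith)]; linarith
        linarith
      have hstep : |b (t + 1)| ≤ (1 - φ / ((t : ℝ) + 1)) * |b t| + |e (t + 1)| := by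
        rw [hrec t ht1]
        calc |(1 - φ / ((t:ℝ) + 1)) * b t + e (t + 1)|
            ≤ |(1 - φ / ((t:ℝ) + 1)) * b t| + |e (t + 1)| := abs_add_le _ _
          _ = (1 - φ / ((t:ℝ) + 1)) * |b t| + |e (t + 1)| := by
              rw [abs_mul, abs_of_nonneg hpos]
      have hTx' : 2 * γ ≤ (φ - γ) * (t : ℝ) := by
        have : (T : ℝ) ≤ (t : ℝ) := by exact_mod_cast ht
        nlinarith
      have hKK : 8 * C / (φ - γ) ≤ K := le_max_right _ _
      calc |b (t + 1)| ≤ (1 - φ / ((t : ℝ) + 1)) * |b t| + |e (t + 1)| := hstep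
        _ ≤ (1 - φ / ((t : ℝ) + 1)) * (K * (t : ℝ) ^ (-γ)) + C * (t : ℝ) ^ (-(1 + β)) := by
            have := he t ht1
            have h4 := mul_le_mul_of_nonneg_left ih hpos
            linarith
        _ ≤ K * ((t : ℝ) + 1) ^ (-γ) :=
            aux_step φ γ β C K (t : ℝ) hγ0 hγ1 hγφ hφ1 hγβ.le hx1 hTx' hC hKK
        _ = K * ((t + 1 : ℕ) : ℝ) ^ (-γ) := by push_cast; ring_nf
  -- conclude the two limits
  have hcast : Tendsto (fun t : ℕ => (t : ℝ)) atTop atTop := tendsto_natCast_atTop_atTop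
  constructor
  · refine squeeze_zero_norm' (a := fun t : ℕ => K * (t : ℝ) ^ (-γ)) ?_ ?_
    · filter_upwards [eventually_ge_atTop T] with t ht
      exact hbound t ht
    · have h5 : Tendsto (fun x : ℝ => K * x ^ (-γ)) atTop (nhds (K * 0)) :=
        (tendsto_rpow_neg_atTop hγ0).const_mul K
      rw [mul_zero] at h5
      exact h5.comp hcast
  · refine squeeze_zero_norm' (a := fun t : ℕ => K * (t : ℝ) ^ (φ / 2 - γ)) ?_ ?_
    · filter_upwards [eventually_ge_atTop T] with t ht
      have ht1 : 1 ≤ t := le_trans hT1 ht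
      have hx0 : (0:ℝ) < (t : ℝ) := by exact_mod_cast ht1
      have h6 := hbound t ht
      calc ‖(t : ℝ) ^ (φ / 2) * b t‖ = (t : ℝ) ^ (φ / 2) * |b t| := by
            rw [Real.norm_eq_abs, abs_mul, abs_of_nonneg (Real.rpow_nonneg hx0.le _)]
        _ ≤ (t : ℝ) ^ (φ / 2) * (K * (t : ℝ) ^ (-γ)) :=
            mul_le_mul_of_nonneg_left h6 (Real.rpow_nonneg hx0.le _)
        _ = K * (t : ℝ) ^ (φ / 2 - γ) := by
            rw [show φ / 2 - γ = φ / 2 + (-γ) by ring, Real.rpow_add hx0]; ring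
    · have h7 : Tendsto (fun x : ℝ => K * x ^ (φ / 2 - γ)) atTop (nhds (K * 0)) := by
        have := tendsto_rpow_neg_atTop (show (0:ℝ) < γ - φ / 2 by linarith)
        rw [show -(γ - φ / 2) = φ / 2 - γ by ring] at this
        exact this.const_mul K
      rw [mul_zero] at h7
      exact h7.comp hcast

theorem one_dim_joint_dynamics
    {Ω : Type*} {m : MeasurableSpace Ω} {μ : Measure Ω} [IsProbabilityMeasure μ]
    (ℱ : Filtration ℕ m) (A B ΔM RA RB : ℕ → Ω → ℝ) (Ainf : Ω → ℝ)
    (φ β C : ℝ) (hφ0 : 0 < φ) (hφ1 : φ ≤ 1) (hβ : φ / 2 < β)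
    (hΔMadapted : ∀ t, StronglyMeasurable[ℱ t] (ΔM t))
    (hΔMmds : ∀ t : ℕ, μ[ΔM (t + 1) | ℱ t] =ᵐ[μ] 0)
    (hrecA : ∀ ω, ∀ t : ℕ,
      A (t + 1) ω = A t ω + (1 / (t + 1)) * φ * ΔM (t + 1) ω + RA (t + 1) ω)
    (hrecB : ∀ ω, ∀ t : ℕ,
      B (t + 1) ω = B t ω - (1 / (t + 1)) * (φ * B t ω - A t ω)
        + (1 / (t + 1)) * ΔM (t + 1) ω + RB (t + 1) ω)
    (hRA : ∀ ω, ∀ t ≥ 1, |RA (t + 1) ω| ≤ C * (t : ℝ) ^ (-(1 + β)))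
    (hRB : ∀ ω, ∀ t ≥ 1, |RB (t + 1) ω| ≤ C * (t : ℝ) ^ (-(1 + β)))
    (hΔMbdd : ∀ ω, ∀ t ≥ 1, |ΔM (t + 1) ω| ≤ C * (t : ℝ) ^ (1 - φ))
    (hAconv : ∀ᵐ ω ∂μ, Tendsto (fun t => A t ω) atTop (nhds (Ainf ω))) :
    ∀ᵐ ω ∂μ,
      Tendsto (fun t => B t ω - A t ω / φ) atTop (nhds 0) ∧
      Tendsto (fun t : ℕ => (t : ℝ) ^ (φ / 2) * (B t ω - A t ω / φ)) atTop (nhds 0) := by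
  apply Filter.Eventually.of_forall
  intro ω
  have hφ : φ ≠ 0 := ne_of_gt hφ0
  -- nonnegativity of C from the bound at t = 1
  have hC : 0 ≤ C := by
    have h1 := hRA ω 1 le_rfl
    have h2 : ((1:ℕ) : ℝ) ^ (-(1 + β)) = 1 := by
      norm_num
    rw [h2, mul_one] at h1
    exact le_trans (abs_nonneg _) h1
  set b : ℕ → ℝ := fun t => B t ω - A t ω / φ with hbdef
  set e : ℕ → ℝ := fun t => RB t ω - RA t ω / φ with hedef
  set C' : ℝ := C * (1 + 1 / φ) with hC'def
  have hC'0 : 0 ≤ C' := by positivity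
  have hrec : ∀ t : ℕ, 1 ≤ t → b (t + 1) = (1 - φ / (t + 1)) * b t + e (t + 1) := by
    intro t _
    simp only [hbdef, hedef]
    rw [hrecA ω t, hrecB ω t]
    have ht0 : ((t : ℝ) + 1) ≠ 0 := by positivity
    field_simp
    ring
  have he : ∀ t : ℕ, 1 ≤ t → |e (t + 1)| ≤ C' * (t : ℝ) ^ (-(1 + β)) := by
    intro t ht
    have h1 := hRA ω t ht
    have h2 := hRB ω t ht
    have h3 : |e (t + 1)| ≤ |RB (t + 1) ω| + |RA (t + 1) ω| / φ := by
      simp only [hedef]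
      calc |RB (t + 1) ω - RA (t + 1) ω / φ| ≤ |RB (t + 1) ω| + |RA (t + 1) ω / φ| := abs_sub _ _
        _ = |RB (t + 1) ω| + |RA (t + 1) ω| / φ := by
            rw [abs_div, abs_of_pos hφ0]
    have h4 : |RA (t + 1) ω| / φ ≤ (C * (t : ℝ) ^ (-(1 + β))) / φ := by
      gcongr
    have hrp : (0:ℝ) ≤ (t : ℝ) ^ (-(1 + β)) := Real.rpow_nonneg (Nat.cast_nonneg t) _
    have h5 : C' * (t : ℝ) ^ (-(1 + β)) = C * (t : ℝ) ^ (-(1 + β)) + (C * (t : ℝ) ^ (-(1 + β))) / φ := by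
      rw [hC'def]; field_simp
    rw [h5]
    linarith
  obtain ⟨hc1, hc2⟩ := aux_contract b e φ β C' hφ0 hφ1 hβ hC'0 hrec he
  exact ⟨hc1, hc2⟩
end
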